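/- Let F be a minimal domination imperfect graph. Then i(F) > 2 and γ(F) = 2. -/

import Mathlib

open SimpleGraph

/-- `D` is a dominating set: every vertex outside `D` has a neighbor in `D`. -/
def IsDominating {V : Type*} (G : SimpleGraph V) (D : Set V) : Prop :=
  ∀ v ∉ D, ∃ u ∈ D, G.Adj u v

/-- `S` is an independent set. -/
def IsIndepSet {V : Type*} (G : SimpleGraph V) (S : Set V) : Prop :=
  ∀ u ∈ S, ∀ v ∈ S, ¬ G.Adj u v

/-- `S` is a maximal independent set. -/
def IsMaxIndep {V : Type*} (G : SimpleGraph V) (S : Set V) : Prop :=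
  _root_.IsIndepSet G S ∧ ∀ T, _root_.IsIndepSet G T → S ⊆ T → T = S

/-- The domination number γ(G). -/
noncomputable def domNum {V : Type*} [Fintype V] (G : SimpleGraph V) : ℕ :=
  sInf {n | ∃ D : Finset V, IsDominating G ↑D ∧ D.card = n}

/-- The independent domination number i(G): minimum size of a maximal independent set. -/
noncomputable def indomNum {V : Type*} [Fintype V] (G : SimpleGraph V) : ℕ :=
  sInf {n | ∃ S : Finset V, IsMaxIndep G ↑S ∧ S.card = n}

/-- `G` is domination perfect: γ(H) = i(H) for every induced subgraph `H`. -/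
def DomPerfect {V : Type*} [Fintype V] (G : SimpleGraph V) : Prop :=
  ∀ s : Finset V, domNum (G.induce (↑s : Set V)) = indomNum (G.induce (↑s : Set V))

/-- `G` is minimal domination imperfect. -/
def MinImperfect {V : Type*} [Fintype V] (G : SimpleGraph V) : Prop :=
  ¬ DomPerfect G ∧ ∀ s : Finset V, s ≠ Finset.univ → DomPerfect (G.induce (↑s : Set V))

/-- The double star S_{2,2}: centers 0,1; leaves 2,3 at 0 and 4,5 at 1. -/
def doubleStar : SimpleGraph (Fin 6) :=
  SimpleGraph.fromRel (fun a b =>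
    (a = 0 ∧ b = 1) ∨ (a = 0 ∧ b = 2) ∨ (a = 0 ∧ b = 3) ∨ (a = 1 ∧ b = 4) ∨ (a = 1 ∧ b = 5))

/-!
Take a minimum dominating set `D` with as few internal edges as possible. If `γ < i`, then `D`
is not independent; pick an edge `uv` inside `D` and let `S` consist of `u`, `v` and the vertices
outside `D` whose only neighbours in `D` are among `u`, `v`. Any `T ⊆ S` dominating `S` can
replace `{u, v}` in `D`, so `γ(G[S]) = 2`; an independent such `T` of size two would give a
minimum dominating set with fewer internal edges, so `i(G[S]) ≥ 3`. For a minimal domination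
imperfect graph, `S` must therefore be the whole vertex set.
-/

open Finset

section Basic
variable {V : Type*} {G : SimpleGraph V}

theorem isMaxIndep_iff_maximal {S : Set V} :
    IsMaxIndep G S ↔ Maximal (_root_.IsIndepSet G) S :=
  and_congr_right fun _ => forall_congr' fun _ => imp_congr_right fun _ =>
    ⟨fun h hST => (h hST).le, fun h hST => (h hST).antisymm hST⟩

theorem isMaxIndep_iff {S : Set V} :
    IsMaxIndep G S ↔ _root_.IsIndepSet G S ∧ IsDominating G S := by
  refine ⟨fun h => ⟨h.1, fun v hv => ?_⟩, fun ⟨hS, hdom⟩ => ⟨hS, fun T hT hST => ?_⟩⟩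
  · by_contra! hnadj
    have hind : _root_.IsIndepSet G (insert v S) := by
      rintro x (rfl | hx) y (rfl | hy) hxy
      · exact G.irrefl hxy
      · exact hnadj y hy hxy.symm
      · exact hnadj x hx hxy
      · exact h.1 x hx y hy hxy
    exact hv (h.2 _ hind (Set.subset_insert v S) ▸ Set.mem_insert v S)
  · refine (Set.Subset.antisymm ?_ hST)
    intro t ht
    by_contra htS
    obtain ⟨s, hs, hst⟩ := hdom t htS
    exact hT s (hST hs) t ht hst

variable [Fintype V]

theorem domNum_le_card {D : Finset V} (h : IsDominating G ↑D) : domNum G ≤ #D :=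
  Nat.sInf_le ⟨D, h, rfl⟩

theorem indomNum_le_card {S : Finset V} (h : IsMaxIndep G ↑S) : indomNum G ≤ #S :=
  Nat.sInf_le ⟨S, h, rfl⟩

theorem exists_isDominating_card_eq_domNum (G : SimpleGraph V) :
    ∃ D : Finset V, IsDominating G ↑D ∧ #D = domNum G :=
  Nat.sInf_mem (s := {n | ∃ D : Finset V, IsDominating G ↑D ∧ #D = n})
    ⟨_, univ, fun v hv => (hv (mem_univ v)).elim, rfl⟩

theorem exists_isMaxIndep (G : SimpleGraph V) : ∃ S : Finset V, IsMaxIndep G ↑S := by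
  obtain ⟨S, hS⟩ := exists_maximal_of_wellFoundedGT (_root_.IsIndepSet G)
    ⟨∅, fun _ h => h.elim⟩
  exact ⟨S.toFinite.toFinset, by rwa [Set.Finite.coe_toFinset, isMaxIndep_iff_maximal]⟩

theorem exists_isMaxIndep_card_eq_indomNum (G : SimpleGraph V) :
    ∃ S : Finset V, IsMaxIndep G ↑S ∧ #S = indomNum G :=
  Nat.sInf_mem (s := {n | ∃ S : Finset V, IsMaxIndep G ↑S ∧ #S = n})
    (let ⟨S, hS⟩ := exists_isMaxIndep G; ⟨_, S, hS, rfl⟩)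

theorem domNum_le_indomNum (G : SimpleGraph V) : domNum G ≤ indomNum G := by
  obtain ⟨S, hS, hcard⟩ := exists_isMaxIndep_card_eq_indomNum G
  exact hcard ▸ domNum_le_card (isMaxIndep_iff.1 hS).2

end Basic

section Iso
variable {V W : Type*} {G : SimpleGraph V} {G' : SimpleGraph W}

theorem IsDominating.image (e : G ≃g G') {S : Set V} (h : IsDominating G S) :
    IsDominating G' (e '' S) := by
  intro w hw
  obtain ⟨u, hu, hadj⟩ := h (e.symm w) fun hS => hw ⟨_, hS, e.apply_symm_apply w⟩
  exact ⟨e u, Set.mem_image_of_mem e hu, by simpa using e.map_adj_iff.2 hadj⟩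

theorem IsIndepSet.image (e : G ≃g G') {S : Set V} (h : _root_.IsIndepSet G S) :
    _root_.IsIndepSet G' (e '' S) := by
  rintro _ ⟨x, hx, rfl⟩ _ ⟨y, hy, rfl⟩ hxy
  exact h x hx y hy (e.map_adj_iff.1 hxy)

variable [Fintype V] [Fintype W]

theorem domNum_le_of_iso (e : G ≃g G') : domNum G' ≤ domNum G := by
  obtain ⟨D, hD, hcard⟩ := exists_isDominating_card_eq_domNum G
  calc domNum G' ≤ #(D.map e.toEquiv.toEmbedding) :=
        domNum_le_card (by rw [coe_map]; exact hD.image e)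
    _ = domNum G := by rw [card_map, hcard]

theorem indomNum_le_of_iso (e : G ≃g G') : indomNum G' ≤ indomNum G := by
  obtain ⟨S, hS, hcard⟩ := exists_isMaxIndep_card_eq_indomNum G
  rw [isMaxIndep_iff] at hS
  calc indomNum G' ≤ #(S.map e.toEquiv.toEmbedding) :=
        indomNum_le_card (by rw [coe_map, isMaxIndep_iff]; exact ⟨hS.1.image e, hS.2.image e⟩)
    _ = indomNum G := by rw [card_map, hcard]

theorem domNum_congr (e : G ≃g G') : domNum G = domNum G' :=
  (domNum_le_of_iso e.symm).antisymm (domNum_le_of_iso e)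

theorem indomNum_congr (e : G ≃g G') : indomNum G = indomNum G' :=
  (indomNum_le_of_iso e.symm).antisymm (indomNum_le_of_iso e)

end Iso

section Induce
variable {V : Type*} {G : SimpleGraph V} {s : Set V} {T : Finset s}

theorem isDominating_induce_iff :
    IsDominating (G.induce s) ↑T ↔
      ∀ w ∈ s, w ∉ T.map (.subtype _) → ∃ t ∈ T.map (.subtype _), G.Adj t w := by
  simp only [IsDominating, SetLike.mem_coe, comap_adj, Function.Embedding.subtype_apply,
    Subtype.exists, exists_and_right, Subtype.forall, mem_map, exists_eq_right, not_exists]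
  exact forall₂_congr fun w hw => imp_congr_left ⟨fun h _ => h, fun h => h hw⟩

theorem IsIndepSet.map_subtype (h : _root_.IsIndepSet (G.induce s) ↑T) :
    _root_.IsIndepSet G ↑(T.map (.subtype _)) := by
  simp only [coe_map]
  rintro _ ⟨x, hx, rfl⟩ _ ⟨y, hy, rfl⟩ hxy
  exact h x hx y hy hxy

end Induce

section AdjPairCount
variable {V : Type*} (G : SimpleGraph V) [DecidableRel G.Adj]

def adjPairCount (D : Finset V) : ℕ := #{p ∈ D ×ˢ D | G.Adj p.1 p.2}

variable {G}

theorem adjPairCount_lt {D D' : Finset V} (hD' : ∀ x ∈ D', ∀ y ∈ D', G.Adj x y → x ∈ D)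
    {u v : V} (hu : u ∈ D) (hv : v ∈ D) (huv : G.Adj u v) (hu' : u ∉ D') :
    adjPairCount G D' < adjPairCount G D := by
  refine card_lt_card ((ssubset_iff_of_subset ?_).2 ⟨(u, v), ?_, ?_⟩)
  · intro p hp
    simp only [mem_filter, mem_product] at hp ⊢
    exact ⟨⟨hD' _ hp.1.1 _ hp.1.2 hp.2, hD' _ hp.1.2 _ hp.1.1 hp.2.symm⟩, hp.2⟩
  · simpa using ⟨⟨hu, hv⟩, huv⟩
  · simp [hu']

end AdjPairCount

section PairPrivateNbhd
variable {V : Type*} [Fintype V] [DecidableEq V] (G : SimpleGraph V) [DecidableRel G.Adj]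

def pairPrivateNbhd (D : Finset V) (u v : V) : Finset V :=
  {w | w = u ∨ w = v ∨ (w ∉ D ∧ (G.Adj u w ∨ G.Adj v w) ∧ ∀ d ∈ D \ {u, v}, ¬ G.Adj d w)}

variable {G} {D T : Finset V} {u v : V}

theorem mem_pairPrivateNbhd {w : V} : w ∈ pairPrivateNbhd G D u v ↔
    w = u ∨ w = v ∨ (w ∉ D ∧ (G.Adj u w ∨ G.Adj v w) ∧ ∀ d ∈ D \ {u, v}, ¬ G.Adj d w) := by
  simp [pairPrivateNbhd]

theorem isDominating_sdiff_union (hD : IsDominating G ↑D)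
    (hT : ∀ w ∈ pairPrivateNbhd G D u v, w ∉ T → ∃ t ∈ T, G.Adj t w) :
    IsDominating G ↑(D \ {u, v} ∪ T) := by
  intro w hw
  by_cases hwS : w ∈ pairPrivateNbhd G D u v
  · obtain ⟨t, ht, hadj⟩ := hT w hwS fun hwT => hw (mem_coe.2 (mem_union_right _ hwT))
    exact ⟨t, mem_coe.2 (mem_union_right _ ht), hadj⟩
  have hwD : w ∉ D := fun hwD => hwS <| mem_pairPrivateNbhd.2 <| by
    by_contra! h
    exact hw (mem_coe.2 (mem_union_left _ (by simp [hwD, h.1, h.2.1])))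
  obtain ⟨d, hd, hadj⟩ := hD w hwD
  by_cases hduv : d = u ∨ d = v
  · obtain ⟨d', hd', hadj'⟩ : ∃ d' ∈ D \ {u, v}, G.Adj d' w := by
      by_contra! h
      have huvw : G.Adj u w ∨ G.Adj v w := by rcases hduv with rfl | rfl <;> simp [hadj]
      exact hwS (mem_pairPrivateNbhd.2 (.inr (.inr ⟨hwD, huvw, h⟩)))
    exact ⟨d', mem_coe.2 (mem_union_left _ hd'), hadj'⟩
  · exact ⟨d, mem_coe.2 (mem_union_left _ (by simp [mem_coe.1 hd, not_or.1 hduv])), hadj⟩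

omit [Fintype V] in
theorem card_sdiff_pair_union_add_two_le (hu : u ∈ D) (hv : v ∈ D) (huv : u ≠ v) :
    #(D \ {u, v} ∪ T) + 2 ≤ #D + #T := by
  have hsdiff : #(D \ {u, v}) + 2 = #D := by
    rw [← card_pair huv]
    exact card_sdiff_add_card_eq_card (by simp [insert_subset_iff, hu, hv])
  have := card_union_le (D \ {u, v}) T
  omega

theorem two_le_card_of_dominates_pairPrivateNbhd (hD : IsDominating G ↑D)
    (hDcard : #D = domNum G) (hu : u ∈ D) (hv : v ∈ D) (huv : u ≠ v)
    (hT : ∀ w ∈ pairPrivateNbhd G D u v, w ∉ T → ∃ t ∈ T, G.Adj t w) : 2 ≤ #T := by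
  have := domNum_le_card (isDominating_sdiff_union hD hT)
  have := card_sdiff_pair_union_add_two_le (T := T) hu hv huv
  omega

theorem three_le_card_of_isIndepSet_of_dominates_pairPrivateNbhd (hD : IsDominating G ↑D)
    (hDcard : #D = domNum G)
    (hDmin : ∀ D' : Finset V, IsDominating G ↑D' → #D' = domNum G →
      adjPairCount G D ≤ adjPairCount G D')
    (hu : u ∈ D) (hv : v ∈ D) (huv : G.Adj u v) (hTS : T ⊆ pairPrivateNbhd G D u v)
    (hTind : _root_.IsIndepSet G ↑T)
    (hT : ∀ w ∈ pairPrivateNbhd G D u v, w ∉ T → ∃ t ∈ T, G.Adj t w) : 3 ≤ #T := by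
  by_contra! hT3
  set D' := D \ {u, v} ∪ T
  have hD' : IsDominating G ↑D' := isDominating_sdiff_union hD hT
  have hD'card : #D' = domNum G := by
    have := domNum_le_card hD'
    have : #D' + 2 ≤ #D + #T := card_sdiff_pair_union_add_two_le hu hv huv.ne
    omega
  -- the vertices of `T` outside `D` are private neighbours, so `D'` has no edges outside `D`
  have hnew : ∀ x ∈ D', ∀ y ∈ D', G.Adj x y → x ∈ D := by
    intro x hx y hy hxy
    by_contra hxD
    have hxT : x ∈ T := (mem_union.1 hx).resolve_left fun h => hxD (mem_sdiff.1 h).1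
    obtain ⟨-, -, hpriv⟩ := ((mem_pairPrivateNbhd.1 (hTS hxT)).resolve_left
      (by rintro rfl; exact hxD hu)).resolve_left (by rintro rfl; exact hxD hv)
    rcases mem_union.1 hy with hy | hy
    · exact hpriv y hy hxy.symm
    · exact hTind x hxT y hy hxy
  have hlt : adjPairCount G D' < adjPairCount G D := by
    rcases not_and_or.1 fun h : u ∈ T ∧ v ∈ T => hTind u h.1 v h.2 huv with h | h
    · exact adjPairCount_lt hnew hu hv huv (by simp [D', h])
    · exact adjPairCount_lt hnew hv hu huv.symm (by simp [D', h])
  exact hlt.not_ge (hDmin D' hD' hD'card)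

variable (G D u v) in
theorem domNum_induce_pairPrivateNbhd_le_two :
    domNum (G.induce ↑(pairPrivateNbhd G D u v)) ≤ 2 := by
  have huS : u ∈ pairPrivateNbhd G D u v := mem_pairPrivateNbhd.2 (.inl rfl)
  have hvS : v ∈ pairPrivateNbhd G D u v := mem_pairPrivateNbhd.2 (.inr (.inl rfl))
  refine (domNum_le_card (D := {⟨u, huS⟩, ⟨v, hvS⟩}) ?_).trans card_le_two
  rintro ⟨w, hwS⟩ hw
  simp only [coe_insert, coe_singleton, Set.mem_insert_iff, Set.mem_singleton_iff,
    Subtype.mk.injEq, not_or] at hw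
  obtain ⟨-, hadj, -⟩ := ((mem_pairPrivateNbhd.1 hwS).resolve_left hw.1).resolve_left hw.2
  rcases hadj with hadj | hadj
  · exact ⟨⟨u, huS⟩, by simp, hadj⟩
  · exact ⟨⟨v, hvS⟩, by simp, hadj⟩

theorem two_le_domNum_induce_pairPrivateNbhd (hD : IsDominating G ↑D)
    (hDcard : #D = domNum G) (hu : u ∈ D) (hv : v ∈ D) (huv : u ≠ v) :
    2 ≤ domNum (G.induce ↑(pairPrivateNbhd G D u v)) := by
  obtain ⟨T, hT, hcard⟩ := exists_isDominating_card_eq_domNum (G.induce ↑(pairPrivateNbhd G D u v))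
  rw [← hcard, ← card_map (.subtype _)]
  exact two_le_card_of_dominates_pairPrivateNbhd hD hDcard hu hv huv
    (isDominating_induce_iff.1 hT)

theorem two_lt_indomNum_induce_pairPrivateNbhd (hD : IsDominating G ↑D)
    (hDcard : #D = domNum G)
    (hDmin : ∀ D' : Finset V, IsDominating G ↑D' → #D' = domNum G →
      adjPairCount G D ≤ adjPairCount G D')
    (hu : u ∈ D) (hv : v ∈ D) (huv : G.Adj u v) :
    2 < indomNum (G.induce ↑(pairPrivateNbhd G D u v)) := by
  obtain ⟨T, hT, hcard⟩ :=
    exists_isMaxIndep_card_eq_indomNum (G.induce ↑(pairPrivateNbhd G D u v))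
  rw [isMaxIndep_iff] at hT
  rw [← hcard, ← card_map (.subtype _)]
  exact three_le_card_of_isIndepSet_of_dominates_pairPrivateNbhd hD hDcard hDmin hu hv huv
    (coe_subset.1 (map_subtype_subset T)) hT.1.map_subtype (isDominating_induce_iff.1 hT.2)

end PairPrivateNbhd

theorem exists_domNum_induce_eq_two_lt_indomNum_induce {V : Type*} [Fintype V]
    (G : SimpleGraph V) (h : domNum G ≠ indomNum G) :
    ∃ S : Finset V, domNum (G.induce ↑S) = 2 ∧ 2 < indomNum (G.induce ↑S) := by
  classical
  obtain ⟨D, hDmem, hDmin⟩ :=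
    ({D | IsDominating G ↑D ∧ #D = domNum G} : Finset (Finset V)).exists_min_image
      (adjPairCount G) (by simpa [Finset.Nonempty] using exists_isDominating_card_eq_domNum G)
  simp only [mem_filter, mem_univ, true_and, and_imp] at hDmem hDmin
  obtain ⟨hD, hDcard⟩ := hDmem
  obtain ⟨u, hu, v, hv, huv⟩ : ∃ u ∈ D, ∃ v ∈ D, G.Adj u v := by
    by_contra! hind
    have hmax : IsMaxIndep G ↑D := isMaxIndep_iff.2 ⟨hind, hD⟩
    exact h ((domNum_le_indomNum G).antisymm (hDcard ▸ indomNum_le_card hmax))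
  exact ⟨pairPrivateNbhd G D u v,
    (domNum_induce_pairPrivateNbhd_le_two G D u v).antisymm
      (two_le_domNum_induce_pairPrivateNbhd hD hDcard hu hv huv.ne),
    two_lt_indomNum_induce_pairPrivateNbhd hD hDcard hDmin hu hv huv⟩

def induceFinsetUnivIso {V : Type*} [Fintype V] (G : SimpleGraph V) :
    G.induce ↑(univ : Finset V) ≃g G where
  toEquiv := Equiv.subtypeUnivEquiv fun _ => mem_coe.2 (mem_univ _)
  map_rel_iff' := Iff.rfl

theorem DomPerfect.domNum_eq_indomNum {V : Type*} [Fintype V] {G : SimpleGraph V}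
    (h : DomPerfect G) : domNum G = indomNum G := by
  simpa only [domNum_congr (induceFinsetUnivIso G), indomNum_congr (induceFinsetUnivIso G)]
    using h univ

theorem MinImperfect.domNum_ne_indomNum {V : Type*} [Fintype V] {G : SimpleGraph V}
    (h : MinImperfect G) : domNum G ≠ indomNum G := by
  intro heq
  refine h.1 fun s => ?_
  by_cases hs : s = univ
  · subst hs
    rwa [domNum_congr (induceFinsetUnivIso G), indomNum_congr (induceFinsetUnivIso G)]
  · exact (h.2 s hs).domNum_eq_indomNum

theorem stmt10 {V : Type*} [Fintype V] (F : SimpleGraph V)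
    (hmin : MinImperfect F) : 2 < indomNum F ∧ domNum F = 2 := by
  obtain ⟨S, hdom, hindom⟩ :=
    exists_domNum_induce_eq_two_lt_indomNum_induce F hmin.domNum_ne_indomNum
  obtain rfl : S = univ := by
    by_contra hS
    have := (hmin.2 S hS).domNum_eq_indomNum
    omega
  rw [domNum_congr (induceFinsetUnivIso F)] at hdom
  rw [indomNum_congr (induceFinsetUnivIso F)] at hindom
  exact ⟨hindom, hdom⟩
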